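/- arXiv:2009.01217 — 10 statements merged into one kernel-verified Lean document; each statement's English description precedes it below -/
import Mathlib

section
/- The forward space of an automaton with n states is spanned by the vectors α M(w) for words w of length at most n−1, i.e., span{α M(w) : w ∈ Σ*} = span{α M(w) : w ∈ Σ*, |w| ≤ n−1}. -/
/-!
Let `F₀ = 0` and `F_{k+1} = K α + Σ_a F_k M(a)`, so that `F_k` is spanned by the `α M(w)` with
`|w| < k`. This is the chain of iterates from `⊥` of a monotone map on subspaces of `Kⁿ`; as
long as it grows, its dimension grows, so it reaches a fixed point by step `n`, and the
fixed point contains every `α M(w)`. Starting the chain at `0` rather than at `K α` spares the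
degenerate case `α = 0` a separate argument.
-/

open Function Matrix Module Submodule

section Stabilization

variable {K V : Type*} [DivisionRing K] [AddCommGroup V] [Module K V] [FiniteDimensional K V]

theorem Submodule.exists_le_finrank_apply_succ_eq {U : ℕ → Submodule K V} (hU : Monotone U) :
    ∃ k ≤ finrank K V, U (k + 1) = U k := by
  by_contra! hne
  have hgrow : ∀ k ≤ finrank K V + 1, k ≤ finrank K (U k) := by
    intro k hk
    induction k with
    | zero => exact Nat.zero_le _
    | succ k ih =>
      have hlt : U k < U (k + 1) := lt_of_le_of_ne (hU k.le_succ) (hne k (by omega)).symm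
      exact (ih (by omega)).trans_lt (finrank_lt_finrank_of_lt hlt)
  have := (hgrow _ le_rfl).trans (U (finrank K V + 1)).finrank_le
  omega

theorem Submodule.iterate_bot_le_iterate_finrank {f : Submodule K V → Submodule K V}
    (hf : Monotone f) (m : ℕ) : f^[m] ⊥ ≤ f^[finrank K V] ⊥ := by
  have hmono : Monotone fun k => f^[k] ⊥ := hf.monotone_iterate_of_le_map bot_le
  obtain ⟨k, hk, hfix⟩ := exists_le_finrank_apply_succ_eq hmono
  rw [iterate_succ_apply'] at hfix
  calc f^[m] ⊥ ≤ f^[m + k] ⊥ := hmono (m.le_add_right k)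
    _ = f^[k] ⊥ := by rw [iterate_add_apply, iterate_fixed hfix]
    _ ≤ f^[finrank K V] ⊥ := hmono hk

end Stabilization

section Automaton

variable {K Sig ι : Type*} [Semiring K] [Fintype ι] (M : Sig → Matrix ι ι K) (α : ι → K)

def forwardStep (U : Submodule K (ι → K)) : Submodule K (ι → K) :=
  K ∙ α ⊔ ⨆ a, U.map (M a).vecMulLinear

theorem forwardStep_mono : Monotone (forwardStep M α) := fun _ _ hUV =>
  sup_le_sup_left (iSup_mono fun _ => map_mono hUV) _

variable [DecidableEq ι]

theorem vecMul_prod_mem_iterate_forwardStep (w : List Sig) :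
    α ᵥ* (w.map M).prod ∈ (forwardStep M α)^[w.length + 1] ⊥ := by
  induction w using List.reverseRecOn with
  | nil => simp [forwardStep]
  | append_singleton w a ih =>
    rw [List.length_append, List.length_singleton, iterate_succ_apply']
    refine mem_sup_right (mem_iSup_of_mem a ⟨_, ih, ?_⟩)
    simp [vecMul_vecMul]

theorem iterate_forwardStep_le_span (k : ℕ) :
    (forwardStep M α)^[k] ⊥ ≤
      span K {v | ∃ w : List Sig, w.length < k ∧ v = α ᵥ* (w.map M).prod} := by
  induction k with
  | zero => simp
  | succ k ih =>
    rw [iterate_succ_apply', forwardStep, sup_le_iff, span_singleton_le_iff_mem, iSup_le_iff]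
    refine ⟨subset_span ⟨[], by simp, by simp⟩, fun a => ?_⟩
    refine (map_mono ih).trans ?_
    rw [map_span_le]
    rintro _ ⟨w, hw, rfl⟩
    exact subset_span ⟨w ++ [a], by simpa using hw, by simp [vecMul_vecMul]⟩

end Automaton

theorem forward_space_short_words_general (K : Type*) [Field K] (Sig : Type*)
    (n : ℕ) (M : Sig → Matrix (Fin n) (Fin n) K) (α : Fin n → K) :
    Submodule.span K (Set.range fun w : List Sig => Matrix.vecMul α ((w.map M).prod)) =
      Submodule.span K
        {v | ∃ w : List Sig, w.length ≤ n - 1 ∧ v = Matrix.vecMul α ((w.map M).prod)} := by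
  refine le_antisymm (span_le.mpr ?_) (span_mono fun _ ⟨w, _, hv⟩ => ⟨w, hv.symm⟩)
  rintro _ ⟨w, rfl⟩
  have hshort : (forwardStep M α)^[n] ⊥ ≤
      span K {v | ∃ w : List Sig, w.length ≤ n - 1 ∧ v = α ᵥ* (w.map M).prod} :=
    (iterate_forwardStep_le_span M α n).trans (span_mono fun _ ⟨u, hu, hv⟩ => ⟨u, by omega, hv⟩)
  have hstable := iterate_bot_le_iterate_finrank (forwardStep_mono M α) (w.length + 1)
  rw [finrank_fin_fun] at hstable
  exact hshort (hstable (vecMul_prod_mem_iterate_forwardStep M α w))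

/-- The forward space of an `n`-state automaton is spanned by the
vectors `α M(w)` for words `w` of length at most `n − 1`:
`span{α M(w) : w ∈ Σ*} = span{α M(w) : |w| ≤ n − 1}`. -/
theorem forward_space_short_words (K : Type*) [Field K] (Sig : Type*) [Fintype Sig]
    (n : ℕ) (M : Sig → Matrix (Fin n) (Fin n) K) (α : Fin n → K) :
    Submodule.span K (Set.range fun w : List Sig => Matrix.vecMul α ((w.map M).prod)) =
      Submodule.span K
        {v | ∃ w : List Sig, w.length ≤ n - 1 ∧ v = Matrix.vecMul α ((w.map M).prod)} :=
  forward_space_short_words_general K Sig n M α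
end

section
/- If an automaton A with n states has ⟦A⟧(w) ≠ 0 for some word w, then there exists a word w' with |w'| ≤ n−1 and ⟦A⟧(w') ≠ 0. -/
open Matrix Module

/-
The row vectors `α M(w)` span, over words of length at most `k`, a subspace `V k` of `Kⁿ`.
These form an increasing chain with `V (k + 1) = V 0 ⊔ ∑ₐ V k · M a`, so the chain becomes
constant as soon as two consecutive terms agree. As `V 0 = K α` is a line and the dimension is
at most `n`, this happens before step `n - 1`; hence every `α M(w)` lies in `V (n - 1)`, and
the functional `x ↦ x ⬝ᵥ η`, which is nonzero on some `α M(w)`, is nonzero on a generator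
`α M(w')` with `|w'| ≤ n - 1`.
-/

theorem Monotone.exists_lt_apply_eq_apply_succ {f : ℕ → ℕ} (hf : Monotone f) {N : ℕ}
    (h : f N < f 0 + N) : ∃ k < N, f k = f (k + 1) := by
  by_contra! hne
  have hgrow : ∀ k ≤ N, f 0 + k ≤ f k := by
    intro k hk
    induction k with
    | zero => rfl
    | succ k ih =>
      have hlt : f k < f (k + 1) := (hf (Nat.le_add_right k 1)).lt_of_ne (hne k hk)
      have := ih (by omega)
      omega
  exact (hgrow N le_rfl).not_gt h

namespace Submodule

variable {K E : Type*} [DivisionRing K] [AddCommGroup E] [Module K E] [FiniteDimensional K E]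

theorem exists_lt_finrank_eq_succ {V : ℕ → Submodule K E} (hV : Monotone V) (h0 : V 0 ≠ ⊥) :
    ∃ k < finrank K E, V k = V (k + 1) := by
  have hdim : finrank K (V (finrank K E)) < finrank K (V 0) + finrank K E := by
    have := (V (finrank K E)).finrank_le
    have := one_le_finrank_iff.2 h0
    omega
  obtain ⟨k, hk, heq⟩ := Monotone.exists_lt_apply_eq_apply_succ
    (fun _ _ hij => finrank_mono (hV hij)) hdim
  exact ⟨k, hk, eq_of_le_of_finrank_eq (hV k.le_succ) heq⟩

theorem le_finrank_sub_one_of_succ_eq {V : ℕ → Submodule K E} (hV : Monotone V)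
    (h0 : V 0 ≠ ⊥) (F : Submodule K E → Submodule K E) (hF : ∀ k, V (k + 1) = F (V k))
    (j : ℕ) : V j ≤ V (finrank K E - 1) := by
  obtain ⟨k, hk, hfix⟩ := exists_lt_finrank_eq_succ hV h0
  have hstable : ∀ i, V (k + i) = V k := by
    intro i
    induction i with
    | zero => rfl
    | succ i ih => rw [← add_assoc, hF, ih, ← hF, hfix]
  calc V j ≤ V (k + j) := hV (by omega)
    _ = V k := hstable j
    _ ≤ V (finrank K E - 1) := hV (by omega)

end Submodule

section ReachableSpan

variable {K Sig ι : Type*} [Semiring K] [Fintype ι] [DecidableEq ι]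
  (α : ι → K) (M : Sig → Matrix ι ι K)

def reachableSpan (k : ℕ) : Submodule K (ι → K) :=
  Submodule.span K {v | ∃ w : List Sig, w.length ≤ k ∧ α ᵥ* (w.map M).prod = v}

theorem reachableSpan_mono : Monotone (reachableSpan α M) :=
  fun _ _ hjk => Submodule.span_mono fun _ ⟨w, hw, hv⟩ => ⟨w, hw.trans hjk, hv⟩

theorem vecMul_prod_mem_reachableSpan (w : List Sig) :
    α ᵥ* (w.map M).prod ∈ reachableSpan α M w.length :=
  Submodule.subset_span ⟨w, le_rfl, rfl⟩

theorem reachableSpan_succ (k : ℕ) :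
    reachableSpan α M (k + 1) =
      reachableSpan α M 0 ⊔ ⨆ a, (reachableSpan α M k).map (M a).vecMulLinear := by
  refine le_antisymm (Submodule.span_le.2 ?_) (sup_le (reachableSpan_mono α M (k + 1).zero_le) ?_)
  · rintro _ ⟨w, hw, rfl⟩
    rcases w.eq_nil_or_concat with rfl | ⟨w, a, rfl⟩
    · exact Submodule.mem_sup_left (vecMul_prod_mem_reachableSpan α M [])
    · have hw : w.length ≤ k := by simpa using hw
      refine Submodule.mem_sup_right (Submodule.mem_iSup_of_mem a ⟨_,
        reachableSpan_mono α M hw (vecMul_prod_mem_reachableSpan α M w), ?_⟩)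
      simp [vecMul_vecMul]
  · refine iSup_le fun a => (Submodule.map_span_le _ _ _).2 ?_
    rintro _ ⟨w, hw, rfl⟩
    exact Submodule.subset_span ⟨w ++ [a], by simpa using hw, by simp [vecMul_vecMul]⟩

end ReachableSpan

theorem short_nonzero_witness_general (K : Type*) [Field K] (Sig : Type*)
    (n : ℕ) (M : Sig → Matrix (Fin n) (Fin n) K) (α η : Fin n → K)
    (h : ∃ w : List Sig, Matrix.vecMul α ((w.map M).prod) ⬝ᵥ η ≠ 0) :
    ∃ w' : List Sig, w'.length ≤ n - 1 ∧ Matrix.vecMul α ((w'.map M).prod) ⬝ᵥ η ≠ 0 := by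
  obtain ⟨w, hw⟩ := h
  have hα : α ≠ 0 := by
    rintro rfl
    simp at hw
  have h0 : reachableSpan α M 0 ≠ ⊥ :=
    (Submodule.ne_bot_iff _).2 ⟨α, by simpa using vecMul_prod_mem_reachableSpan α M [], hα⟩
  have hw_mem : α ᵥ* (w.map M).prod ∈ reachableSpan α M (n - 1) := by
    have hle := Submodule.le_finrank_sub_one_of_succ_eq (reachableSpan_mono α M) h0
      (fun W => reachableSpan α M 0 ⊔ ⨆ a, W.map (M a).vecMulLinear) (reachableSpan_succ α M)
      w.length
    rw [finrank_fin_fun] at hle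
    exact hle (vecMul_prod_mem_reachableSpan α M w)
  by_contra! hshort
  have hker : reachableSpan α M (n - 1) ≤ LinearMap.ker ((dotProductBilin K K).flip η) :=
    Submodule.span_le.2 fun _ ⟨w', hw', hv⟩ => hv ▸ hshort w' hw'
  exact hw (hker hw_mem)

/-- If an `n`-state automaton has `⟦A⟧(w) ≠ 0` for some word `w`,
then there is a word `w'` with `|w'| ≤ n − 1` and `⟦A⟧(w') ≠ 0`. -/
theorem short_nonzero_witness (K : Type*) [Field K] (Sig : Type*) [Fintype Sig]
    (n : ℕ) (M : Sig → Matrix (Fin n) (Fin n) K) (α η : Fin n → K)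
    (h : ∃ w : List Sig, Matrix.vecMul α ((w.map M).prod) ⬝ᵥ η ≠ 0) :
    ∃ w' : List Sig, w'.length ≤ n - 1 ∧ Matrix.vecMul α ((w'.map M).prod) ⬝ᵥ η ≠ 0 :=
  short_nonzero_witness_general K Sig n M α η h
end

section
/- If two automata A₁, A₂ with n₁ and n₂ states respectively are inequivalent, then there exists a word w with |w| ≤ n₁ + n₂ − 1 such that ⟦A₁⟧(w) ≠ ⟦A₂⟧(w). -/
/-!
Run both automata in parallel on `V = K^n₁ × K^n₂`: after reading `w` they reach the row vector
`(α₁ M₁(w), α₂ M₂(w))`, and `⟦A₁⟧(w) - ⟦A₂⟧(w)` is a fixed linear functional of it. The spans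
`U k` of the vectors reached by words of length `≤ k` increase, and `U (k+1) = U 0 + Σₐ U k M(a)`,
so the chain is constant as soon as it stalls once. Since `dim U 0 = 1` (unless the initial vector
is `0` and everything vanishes) and `dim V = n₁ + n₂`, it stalls by `k = n₁ + n₂ - 1`. Hence a
functional vanishing on the short words vanishes on all words.
-/

open Matrix

theorem Nat.exists_eq_succ_of_monotone_of_le {f : ℕ → ℕ} {d : ℕ} (hf : Monotone f)
    (hd : ∀ n, f n ≤ d) : ∃ k ≤ d - f 0, f k = f (k + 1) := by
  by_contra! hne
  have hgrow : ∀ k ≤ d - f 0 + 1, f 0 + k ≤ f k := by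
    intro k
    induction k with
    | zero => simp
    | succ k ih =>
      intro hk
      have hstep := lt_of_le_of_ne (hf (Nat.le_add_right k 1)) (hne k (by omega))
      have hk' := ih (by omega)
      omega
  have hlast := hgrow _ le_rfl
  have hbound := hd (d - f 0 + 1)
  have hstart := hd 0
  omega

theorem Submodule.exists_eq_succ_of_monotone {K V : Type*} [DivisionRing K] [AddCommGroup V]
    [Module K V] [FiniteDimensional K V] {U : ℕ → Submodule K V} (hU : Monotone U) :
    ∃ k ≤ Module.finrank K V - Module.finrank K (U 0), U k = U (k + 1) := by
  obtain ⟨k, hk, heq⟩ := Nat.exists_eq_succ_of_monotone_of_le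
    (fun _ _ h => Submodule.finrank_mono (hU h)) (fun n => Submodule.finrank_le (U n))
  exact ⟨k, hk, Submodule.eq_of_le_of_finrank_eq (hU k.le_succ) heq⟩

section Reach

variable {K V Sig : Type*} [Semiring K] [AddCommMonoid V] [Module K V]
  (T : Sig → V →ₗ[K] V) (v : V)

-- The first letter of `w` acts first, matching `α ᵥ* M(a₁) * ⋯ * M(aₖ)`.
def reachVec (w : List Sig) : V :=
  w.foldl (fun x a => T a x) v

def reachSpan (k : ℕ) : Submodule K V :=
  Submodule.span K (reachVec T v '' {w | w.length ≤ k})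

variable {T v}

theorem reachVec_nil : reachVec T v [] = v := rfl

theorem reachVec_concat (w : List Sig) (a : Sig) :
    reachVec T v (w ++ [a]) = T a (reachVec T v w) := by
  simp [reachVec]

theorem reachVec_mem_reachSpan_length (w : List Sig) : reachVec T v w ∈ reachSpan T v w.length :=
  Submodule.subset_span ⟨w, le_refl w.length, rfl⟩

theorem reachSpan_mono : Monotone (reachSpan T v) := fun _ _ hij =>
  Submodule.span_mono (Set.image_mono fun _ hw => le_trans hw hij)

theorem reachSpan_zero : reachSpan T v 0 = K ∙ v := by
  simp [reachSpan, List.length_eq_zero_iff, reachVec_nil]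

theorem reachSpan_succ (k : ℕ) :
    reachSpan T v (k + 1) = (K ∙ v) ⊔ ⨆ a, (reachSpan T v k).map (T a) := by
  apply le_antisymm
  · rw [reachSpan, Submodule.span_le]
    rintro _ ⟨w, hw, rfl⟩
    rcases List.eq_nil_or_concat w with rfl | ⟨w', a, rfl⟩
    · exact Submodule.mem_sup_left (Submodule.mem_span_singleton_self v)
    · rw [List.concat_eq_append, reachVec_concat]
      refine Submodule.mem_sup_right (Submodule.mem_iSup_of_mem a (Submodule.mem_map_of_mem ?_))
      exact Submodule.subset_span ⟨w', by simpa using hw, rfl⟩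
  · refine sup_le ?_ (iSup_le fun a => ?_)
    · rw [← reachSpan_zero]
      exact reachSpan_mono (Nat.zero_le _)
    · rw [reachSpan, Submodule.map_span, Submodule.span_le]
      rintro _ ⟨_, ⟨w, hw, rfl⟩, rfl⟩
      rw [← reachVec_concat]
      exact Submodule.subset_span ⟨w ++ [a], by simpa using hw, rfl⟩

theorem reachSpan_add_eq_of_eq_succ {k : ℕ} (hk : reachSpan T v k = reachSpan T v (k + 1))
    (m : ℕ) : reachSpan T v (k + m) = reachSpan T v k := by
  induction m with
  | zero => rfl
  | succ m ih => rw [← add_assoc, reachSpan_succ, ih, ← reachSpan_succ, ← hk]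

theorem reachVec_eq_zero_of_eq_zero (hv : v = 0) (w : List Sig) : reachVec T v w = 0 := by
  induction w using List.reverseRecOn with
  | nil => exact hv
  | append_singleton w a ih => rw [reachVec_concat, ih, map_zero]

end Reach

section ReachFiniteDimensional

variable {K V Sig : Type*} [DivisionRing K] [AddCommGroup V] [Module K V] [FiniteDimensional K V]
  {T : Sig → V →ₗ[K] V} {v : V}

theorem reachVec_mem_reachSpan_finrank_sub_one (w : List Sig) :
    reachVec T v w ∈ reachSpan T v (Module.finrank K V - 1) := by
  rcases eq_or_ne v 0 with hv | hv
  · rw [reachVec_eq_zero_of_eq_zero hv]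
    exact zero_mem _
  obtain ⟨k, hk, hstable⟩ :=
    Submodule.exists_eq_succ_of_monotone (reachSpan_mono (T := T) (v := v))
  rw [reachSpan_zero, finrank_span_singleton hv] at hk
  have hw : reachVec T v w ∈ reachSpan T v k := by
    rw [← reachSpan_add_eq_of_eq_succ hstable w.length]
    exact reachSpan_mono (Nat.le_add_left _ _) (reachVec_mem_reachSpan_length w)
  exact reachSpan_mono hk hw

theorem LinearMap.map_reachVec_eq_zero_of_short {W : Type*} [AddCommGroup W] [Module K W]
    (φ : V →ₗ[K] W)
    (hshort : ∀ w : List Sig, w.length ≤ Module.finrank K V - 1 → φ (reachVec T v w) = 0)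
    (w : List Sig) : φ (reachVec T v w) = 0 := by
  have hspan : reachSpan T v (Module.finrank K V - 1) ≤ LinearMap.ker φ := by
    rw [reachSpan, Submodule.span_le]
    rintro _ ⟨w, hw, rfl⟩
    exact hshort w hw
  exact hspan (reachVec_mem_reachSpan_finrank_sub_one w)

end ReachFiniteDimensional

theorem reachVec_prodMap_vecMulLinear {K Sig : Type*} [CommSemiring K] {n₁ n₂ : ℕ}
    (M₁ : Sig → Matrix (Fin n₁) (Fin n₁) K) (α₁ : Fin n₁ → K)
    (M₂ : Sig → Matrix (Fin n₂) (Fin n₂) K) (α₂ : Fin n₂ → K) (w : List Sig) :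
    reachVec (fun a => (M₁ a).vecMulLinear.prodMap (M₂ a).vecMulLinear) (α₁, α₂) w =
      (α₁ ᵥ* (w.map M₁).prod, α₂ ᵥ* (w.map M₂).prod) := by
  induction w using List.reverseRecOn with
  | nil => simp [reachVec_nil]
  | append_singleton w a ih => simp [reachVec_concat, ih, vecMul_vecMul]

theorem short_inequivalence_witness_general (K : Type*) [Field K] (Sig : Type*)
    (n₁ n₂ : ℕ)
    (M₁ : Sig → Matrix (Fin n₁) (Fin n₁) K) (α₁ η₁ : Fin n₁ → K)
    (M₂ : Sig → Matrix (Fin n₂) (Fin n₂) K) (α₂ η₂ : Fin n₂ → K)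
    (h : ¬ ∀ w : List Sig,
      Matrix.vecMul α₁ ((w.map M₁).prod) ⬝ᵥ η₁ = Matrix.vecMul α₂ ((w.map M₂).prod) ⬝ᵥ η₂) :
    ∃ w : List Sig, w.length ≤ n₁ + n₂ - 1 ∧
      Matrix.vecMul α₁ ((w.map M₁).prod) ⬝ᵥ η₁ ≠ Matrix.vecMul α₂ ((w.map M₂).prod) ⬝ᵥ η₂ := by
  contrapose! h
  let φ : ((Fin n₁ → K) × (Fin n₂ → K)) →ₗ[K] K :=
    ((dotProductBilin K K).flip η₁).coprod (-(dotProductBilin K K).flip η₂)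
  have hφ : ∀ w : List Sig, φ (reachVec (fun a => (M₁ a).vecMulLinear.prodMap
      (M₂ a).vecMulLinear) (α₁, α₂) w) =
      α₁ ᵥ* (w.map M₁).prod ⬝ᵥ η₁ - α₂ ᵥ* (w.map M₂).prod ⬝ᵥ η₂ := fun w => by
    simp [φ, reachVec_prodMap_vecMulLinear, sub_eq_add_neg]
  have hdim : Module.finrank K ((Fin n₁ → K) × (Fin n₂ → K)) = n₁ + n₂ := by
    simp [Module.finrank_prod]
  intro w
  rw [← sub_eq_zero, ← hφ]
  refine φ.map_reachVec_eq_zero_of_short (fun u hu => ?_) w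
  rw [hφ, sub_eq_zero]
  exact h u (hdim ▸ hu)

/-- If two automata with `n₁` and `n₂` states are inequivalent,
then some word `w` with `|w| ≤ n₁ + n₂ − 1` satisfies `⟦A₁⟧(w) ≠ ⟦A₂⟧(w)`. -/
theorem short_inequivalence_witness (K : Type*) [Field K] (Sig : Type*) [Fintype Sig]
    (n₁ n₂ : ℕ)
    (M₁ : Sig → Matrix (Fin n₁) (Fin n₁) K) (α₁ η₁ : Fin n₁ → K)
    (M₂ : Sig → Matrix (Fin n₂) (Fin n₂) K) (α₂ η₂ : Fin n₂ → K)
    (h : ¬ ∀ w : List Sig,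
      Matrix.vecMul α₁ ((w.map M₁).prod) ⬝ᵥ η₁ = Matrix.vecMul α₂ ((w.map M₂).prod) ⬝ᵥ η₂) :
    ∃ w : List Sig, w.length ≤ n₁ + n₂ - 1 ∧
      Matrix.vecMul α₁ ((w.map M₁).prod) ⬝ᵥ η₁ ≠ Matrix.vecMul α₂ ((w.map M₂).prod) ⬝ᵥ η₂ :=
  short_inequivalence_witness_general K Sig n₁ n₂ M₁ α₁ η₁ M₂ α₂ η₂ h
end

section
/- Let F be a matrix whose rows form a basis of the forward space of A, with F M(a) = M⃗(a) F for all a ∈ Σ, and α = α⃗ F. Then the forward conjugate A⃗ = (n⃗, Σ, M⃗, α⃗, F η) satisfies ⟦A⃗⟧ = ⟦A⟧. -/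
open Matrix

theorem Matrix.mul_prod_map_eq_prod_map_mul {R ι m n : Type*} [Semiring R]
    [Fintype m] [DecidableEq m] [Fintype n] [DecidableEq n]
    {F : Matrix m n R} {M : ι → Matrix n n R} {M' : ι → Matrix m m R}
    (hM : ∀ a, F * M a = M' a * F) (w : List ι) :
    F * (w.map M).prod = (w.map M').prod * F := by
  induction w with
  | nil => simp
  | cons a w ih =>
    rw [List.map_cons, List.map_cons, List.prod_cons, List.prod_cons, ← Matrix.mul_assoc, hM a,
      Matrix.mul_assoc, ih, Matrix.mul_assoc]

theorem forward_conjugate_equivalent_general (K : Type*) [Field K] (Sig : Type*)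
    (n nf : ℕ) (M : Sig → Matrix (Fin n) (Fin n) K) (α η : Fin n → K)
    (F : Matrix (Fin nf) (Fin n) K)
    (Mf : Sig → Matrix (Fin nf) (Fin nf) K)
    (hM : ∀ a : Sig, F * M a = Mf a * F)
    (αf : Fin nf → K) (hα : Matrix.vecMul αf F = α) :
    ∀ w : List Sig,
      Matrix.vecMul αf ((w.map Mf).prod) ⬝ᵥ F.mulVec η =
        Matrix.vecMul α ((w.map M).prod) ⬝ᵥ η := by
  intro w
  have hstate : vecMul (vecMul αf (w.map Mf).prod) F = vecMul α (w.map M).prod := by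
    rw [vecMul_vecMul, ← mul_prod_map_eq_prod_map_mul hM, ← vecMul_vecMul, hα]
  rw [dotProduct_mulVec, hstate]

/-- If the rows of `F` form a basis of the forward space of `A`,
`F M(a) = M⃗(a) F` for all letters `a`, and `α = α⃗ F`, then the forward
conjugate `A⃗ = (n⃗, Σ, M⃗, α⃗, F η)` satisfies `⟦A⃗⟧ = ⟦A⟧`. -/
theorem forward_conjugate_equivalent (K : Type*) [Field K] (Sig : Type*) [Fintype Sig]
    (n nf : ℕ) (M : Sig → Matrix (Fin n) (Fin n) K) (α η : Fin n → K)
    (F : Matrix (Fin nf) (Fin n) K)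
    (hind : LinearIndependent K (fun i => F i))
    (hspan : Submodule.span K (Set.range fun i => F i) =
      Submodule.span K (Set.range fun w : List Sig => Matrix.vecMul α ((w.map M).prod)))
    (Mf : Sig → Matrix (Fin nf) (Fin nf) K)
    (hM : ∀ a : Sig, F * M a = Mf a * F)
    (αf : Fin nf → K) (hα : Matrix.vecMul αf F = α) :
    ∀ w : List Sig,
      Matrix.vecMul αf ((w.map Mf).prod) ⬝ᵥ F.mulVec η =
        Matrix.vecMul α ((w.map M).prod) ⬝ᵥ η :=
  forward_conjugate_equivalent_general K Sig n nf M α η F Mf hM αf hα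
end

section
/- If A is an automaton with n states, then the rank of the Hankel matrix of ⟦A⟧ is at most n. -/
/-!
Every row of the Hankel matrix of `⟦A⟧` has the form `y ↦ v M(y) η` with
`v = α M(x)`, and `v ↦ (y ↦ v M(y) η)` is a linear map out of the `n`-dimensional
state space `K^n`; so all rows lie in a subspace of dimension at most `n`.
-/

open Matrix

namespace WeightedAutomaton

variable {K Sig ι : Type*} [Field K] [Fintype ι] [DecidableEq ι]

noncomputable def seriesFrom (M : Sig → Matrix ι ι K) (η : ι → K) :
    (ι → K) →ₗ[K] (List Sig → K) where
  toFun v y := v ᵥ* (y.map M).prod ⬝ᵥ η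
  map_add' u v := by
    funext y
    simp only [add_vecMul, add_dotProduct, Pi.add_apply]
  map_smul' c v := by
    funext y
    simp only [smul_vecMul, smul_dotProduct, Pi.smul_apply, RingHom.id_apply]

theorem hankel_row_eq_seriesFrom (M : Sig → Matrix ι ι K) (α η : ι → K) (x : List Sig) :
    (fun y : List Sig => α ᵥ* ((x ++ y).map M).prod ⬝ᵥ η) =
      seriesFrom M η (α ᵥ* (x.map M).prod) := by
  funext y
  simp [seriesFrom, List.prod_append, vecMul_vecMul]

theorem span_hankel_rows_le_range_seriesFrom (M : Sig → Matrix ι ι K) (α η : ι → K) :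
    Submodule.span K (Set.range fun x : List Sig =>
        fun y : List Sig => α ᵥ* ((x ++ y).map M).prod ⬝ᵥ η) ≤
      LinearMap.range (seriesFrom M η) := by
  rw [Submodule.span_le]
  rintro _ ⟨x, rfl⟩
  exact ⟨_, (hankel_row_eq_seriesFrom M α η x).symm⟩

theorem rank_range_seriesFrom_le (M : Sig → Matrix ι ι K) (η : ι → K) :
    Module.rank K (LinearMap.range (seriesFrom M η)) ≤ Fintype.card ι := by
  simpa using lift_rank_range_le (seriesFrom M η)

end WeightedAutomaton

theorem hankel_rank_le_general (K : Type*) [Field K] (Sig : Type*)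
    (n : ℕ) (M : Sig → Matrix (Fin n) (Fin n) K) (α η : Fin n → K) :
    Module.rank K
        (Submodule.span K (Set.range fun x : List Sig =>
          fun y : List Sig => Matrix.vecMul α (((x ++ y).map M).prod) ⬝ᵥ η)) ≤ n := by
  calc _ ≤ Module.rank K (LinearMap.range (WeightedAutomaton.seriesFrom M η)) :=
        Submodule.rank_mono (WeightedAutomaton.span_hankel_rows_le_range_seriesFrom M α η)
    _ ≤ n := by simpa using WeightedAutomaton.rank_range_seriesFrom_le M η

/-- If `A` is an automaton with `n` states, then the rank of the
Hankel matrix of `⟦A⟧` (the dimension of the span of its rows in the function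
space `K^{Σ*}`) is at most `n`. -/
theorem hankel_rank_le (K : Type*) [Field K] (Sig : Type*) [Fintype Sig]
    (n : ℕ) (M : Sig → Matrix (Fin n) (Fin n) K) (α η : Fin n → K) :
    Module.rank K
        (Submodule.span K (Set.range fun x : List Sig =>
          fun y : List Sig => Matrix.vecMul α (((x ++ y).map M).prod) ⬝ᵥ η)) ≤ n :=
  hankel_rank_le_general K Sig n M α η
end

section
/- A forward conjugate of any automaton is forward-minimal: if A⃗ = (n⃗, Σ, M⃗, α⃗, F η) is the forward conjugate of A with base F, then the forward space of A⃗ has dimension n⃗ (i.e., span{α⃗ M⃗(w) : w ∈ Σ*} = K^{n⃗}). -/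
open Matrix

/-!
Since `F M(w) = M⃗(w) F` for every word `w`, the injective map `v ↦ v F` sends
`α⃗ M⃗(w)` to `α M(w)`, hence the forward space of `A⃗` onto the forward space of `A`.
That space is spanned by the rows of `F`, i.e. it is the image of all of `K^{n⃗}`,
so injectivity forces the forward space of `A⃗` to be everything.
-/

section Intertwining

variable {R : Type*} {Sig : Type*} {m n : Type*}

def forwardSpace [CommSemiring R] [Fintype n] [DecidableEq n]
    (M : Sig → Matrix n n R) (α : n → R) :
    Submodule R (n → R) :=
  Submodule.span R (Set.range fun w : List Sig => vecMul α (w.map M).prod)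

theorem Matrix.mul_list_prod_map_of_intertwines [Semiring R] [Fintype m] [Fintype n]
    [DecidableEq m] [DecidableEq n] {F : Matrix m n R} {M : Sig → Matrix n n R}
    {Mf : Sig → Matrix m m R} (hM : ∀ a, F * M a = Mf a * F) (w : List Sig) :
    F * (w.map M).prod = (w.map Mf).prod * F := by
  induction w with
  | nil => simp
  | cons a w ih =>
    simp only [List.map_cons, List.prod_cons]
    rw [← Matrix.mul_assoc, hM a, Matrix.mul_assoc, ih, Matrix.mul_assoc]

theorem map_vecMulLinear_forwardSpace_of_intertwines [CommSemiring R] [Fintype m] [Fintype n]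
    [DecidableEq m] [DecidableEq n] {F : Matrix m n R} {M : Sig → Matrix n n R}
    {Mf : Sig → Matrix m m R} (hM : ∀ a, F * M a = Mf a * F) (αf : m → R) :
    (forwardSpace Mf αf).map F.vecMulLinear = forwardSpace M (vecMul αf F) := by
  rw [forwardSpace, Submodule.map_span, ← Set.range_comp]
  congr 2 with w : 1
  simp only [Function.comp_apply, vecMulLinear_apply, vecMul_vecMul,
    mul_list_prod_map_of_intertwines hM]

end Intertwining

theorem forward_conjugate_forward_minimal_general (K : Type*) [Field K] (Sig : Type*)
    (n nf : ℕ) (M : Sig → Matrix (Fin n) (Fin n) K) (α : Fin n → K)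
    (F : Matrix (Fin nf) (Fin n) K)
    (hind : LinearIndependent K (fun i => F i))
    (hspan : Submodule.span K (Set.range fun i => F i) =
      Submodule.span K (Set.range fun w : List Sig => Matrix.vecMul α ((w.map M).prod)))
    (Mf : Sig → Matrix (Fin nf) (Fin nf) K)
    (hM : ∀ a : Sig, F * M a = Mf a * F)
    (αf : Fin nf → K) (hα : Matrix.vecMul αf F = α) :
    Submodule.span K (Set.range fun w : List Sig => Matrix.vecMul αf ((w.map Mf).prod)) = ⊤ := by
  have hinj : Function.Injective F.vecMulLinear := vecMul_injective_iff.mpr hind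
  refine Submodule.map_injective_of_injective hinj ?_
  change (forwardSpace Mf αf).map F.vecMulLinear = (⊤ : Submodule K _).map F.vecMulLinear
  rw [map_vecMulLinear_forwardSpace_of_intertwines hM, hα, forwardSpace, ← hspan,
    ← LinearMap.range_eq_map, range_vecMulLinear]
  rfl

/-- A forward conjugate is forward-minimal: if `A⃗` is the forward
conjugate of `A` with base `F` (rows of `F` form a basis of the forward space
of `A`, `F M(a) = M⃗(a) F`, `α⃗ F = α`), then the forward space of `A⃗` is all
of `K^{n⃗}`. -/
theorem forward_conjugate_forward_minimal (K : Type*) [Field K] (Sig : Type*) [Fintype Sig]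
    (n nf : ℕ) (M : Sig → Matrix (Fin n) (Fin n) K) (α η : Fin n → K)
    (F : Matrix (Fin nf) (Fin n) K)
    (hind : LinearIndependent K (fun i => F i))
    (hspan : Submodule.span K (Set.range fun i => F i) =
      Submodule.span K (Set.range fun w : List Sig => Matrix.vecMul α ((w.map M).prod)))
    (Mf : Sig → Matrix (Fin nf) (Fin nf) K)
    (hM : ∀ a : Sig, F * M a = Mf a * F)
    (αf : Fin nf → K) (hα : Matrix.vecMul αf F = α) :
    Submodule.span K (Set.range fun w : List Sig => Matrix.vecMul αf ((w.map Mf).prod)) = ⊤ :=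
  forward_conjugate_forward_minimal_general K Sig n nf M α F hind hspan Mf hM αf hα
end

section
/- A backward conjugate of a forward-minimal automaton is minimal: if A is forward-minimal with n states and B ∈ K^{n×n⃖} is a matrix whose columns form a basis of the backward space of A, then n⃖ equals the rank of the Hankel matrix of ⟦A⟧; consequently no automaton with fewer than n⃖ states realizes ⟦A⟧. -/
/-!
The Hankel row of a word `x` is `y ↦ v ⬝ᵥ M(y) η` for the forward vector `v = α M(x)`. Since the
forward vectors span `K^n`, the row space of the Hankel matrix is the image of `K^n` under
`v ↦ (y ↦ v ⬝ᵥ M(y) η)`; this map is the dual of the inclusion of the backward space (up to the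
dot-product identification `K^n ≅ (K^n)^*`), so its image has the dimension of the backward space,
which is `n⃖`. Conversely, every Hankel row of an `m`-state automaton is a combination of the `m`
coordinate functions `y ↦ (M'(y) η')_q`.
-/

open Matrix Module Submodule

section DualEval

variable {K V ι : Type*} [Field K] [AddCommGroup V] [Module K V]

theorem finrank_range_pi_dualEval (u : ι → V) :
    finrank K (LinearMap.range (LinearMap.pi fun i => Dual.eval K V (u i))) =
      finrank K (span K (Set.range u)) := by
  have h : (LinearMap.pi fun i => Dual.eval K V (u i)) =
      (Finsupp.llift K K K ι).symm.toLinearMap ∘ₗ (Finsupp.linearCombination K u).dualMap := by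
    ext f i
    simp
  rw [h, LinearMap.range_comp, LinearEquiv.finrank_map_eq,
    LinearMap.finrank_range_dualMap_eq_finrank_range, Finsupp.range_linearCombination]

end DualEval

namespace WeightedAutomaton

variable {K Sig Q : Type*} [Field K] [Fintype Q] [DecidableEq Q]

def series (α : Q → K) (M : Sig → Matrix Q Q K) (η : Q → K) (w : List Sig) : K :=
  Matrix.vecMul α ((w.map M).prod) ⬝ᵥ η

def hankelRowSpace (s : List Sig → K) : Submodule K (List Sig → K) :=
  span K (Set.range fun x y => s (x ++ y))

def forwardSpace (α : Q → K) (M : Sig → Matrix Q Q K) : Submodule K (Q → K) :=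
  span K (Set.range fun w : List Sig => Matrix.vecMul α ((w.map M).prod))

def backwardSpace (M : Sig → Matrix Q Q K) (η : Q → K) : Submodule K (Q → K) :=
  span K (Set.range fun w : List Sig => ((w.map M).prod).mulVec η)

def backwardPairing (M : Sig → Matrix Q Q K) (η : Q → K) : (Q → K) →ₗ[K] (List Sig → K) :=
  (LinearMap.pi fun y : List Sig => Dual.eval K _ (((y.map M).prod).mulVec η)) ∘ₗ
    (dotProductEquiv K Q).toLinearMap

theorem backwardPairing_apply (M : Sig → Matrix Q Q K) (η v : Q → K) (y : List Sig) :
    backwardPairing M η v y = v ⬝ᵥ ((y.map M).prod).mulVec η := by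
  simp [backwardPairing]

theorem finrank_range_backwardPairing (M : Sig → Matrix Q Q K) (η : Q → K) :
    finrank K (LinearMap.range (backwardPairing M η)) = finrank K (backwardSpace M η) := by
  rw [backwardPairing, LinearEquiv.range_comp, finrank_range_pi_dualEval, backwardSpace]

theorem hankelRowSpace_series_eq_range {α : Q → K} {M : Sig → Matrix Q Q K}
    (hfwd : forwardSpace α M = ⊤) (η : Q → K) :
    hankelRowSpace (series α M η) = LinearMap.range (backwardPairing M η) := by
  have hrow : (fun x y => series α M η (x ++ y)) =
      backwardPairing M η ∘ fun x : List Sig => Matrix.vecMul α ((x.map M).prod) := by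
    ext x y
    simp [series, backwardPairing_apply, dotProduct_mulVec]
  rw [hankelRowSpace, hrow, Set.range_comp, ← LinearMap.map_span, ← forwardSpace, hfwd,
    Submodule.map_top]

theorem hankelRowSpace_le_span_backwardCoords {s : List Sig → K} {α : Q → K}
    {M : Sig → Matrix Q Q K} {η : Q → K} (hs : ∀ w, series α M η w = s w) :
    hankelRowSpace s ≤ span K (Set.range fun q y => ((y.map M).prod).mulVec η q) := by
  rw [hankelRowSpace, span_le]
  rintro - ⟨x, rfl⟩
  have hrow : (fun y => s (x ++ y)) =
      ∑ q, Matrix.vecMul α ((x.map M).prod) q • fun y => ((y.map M).prod).mulVec η q := by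
    ext y
    rw [← hs, series, List.map_append, List.prod_append, ← Matrix.vecMul_vecMul,
      ← dotProduct_mulVec]
    simp [dotProduct]
  change (fun y => s (x ++ y)) ∈ _
  rw [hrow]
  exact sum_mem fun q _ => smul_mem _ _ (subset_span ⟨q, rfl⟩)

theorem finrank_hankelRowSpace_le {s : List Sig → K} {α : Q → K}
    {M : Sig → Matrix Q Q K} {η : Q → K} (hs : ∀ w, series α M η w = s w) :
    finrank K (hankelRowSpace s) ≤ Fintype.card Q := by
  have := FiniteDimensional.span_of_finite K
    (Set.finite_range fun q (y : List Sig) => ((y.map M).prod).mulVec η q)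
  exact (finrank_mono (hankelRowSpace_le_span_backwardCoords hs)).trans (finrank_range_le_card _)

end WeightedAutomaton

open WeightedAutomaton

theorem backward_conjugate_of_forward_minimal_minimal_general
    (K : Type*) [Field K] (Sig : Type*)
    (n nb : ℕ) (M : Sig → Matrix (Fin n) (Fin n) K) (α η : Fin n → K)
    (hfwd : Submodule.span K
      (Set.range fun w : List Sig => Matrix.vecMul α ((w.map M).prod)) = ⊤)
    (B : Matrix (Fin n) (Fin nb) K)
    (hind : LinearIndependent K (fun j => fun i => B i j))
    (hspan : Submodule.span K (Set.range fun j => fun i => B i j) =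
      Submodule.span K (Set.range fun w : List Sig => ((w.map M).prod).mulVec η)) :
    (nb : Cardinal) = Module.rank K
        (Submodule.span K (Set.range fun x : List Sig =>
          fun y : List Sig => Matrix.vecMul α (((x ++ y).map M).prod) ⬝ᵥ η)) ∧
    (∀ (m : ℕ) (M' : Sig → Matrix (Fin m) (Fin m) K) (α' η' : Fin m → K),
      (∀ w : List Sig,
        Matrix.vecMul α' ((w.map M').prod) ⬝ᵥ η' = Matrix.vecMul α ((w.map M).prod) ⬝ᵥ η) →
      nb ≤ m) := by
  have hH : hankelRowSpace (series α M η) = LinearMap.range (backwardPairing M η) :=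
    hankelRowSpace_series_eq_range hfwd η
  have hrank : finrank K (hankelRowSpace (series α M η)) = nb := by
    rw [hH, finrank_range_backwardPairing, backwardSpace, ← hspan, finrank_span_eq_card hind,
      Fintype.card_fin]
  refine ⟨?_, fun m M' α' η' hreal => ?_⟩
  · change (nb : Cardinal) = Module.rank K (hankelRowSpace (series α M η))
    rw [← hrank, hH, finrank_eq_rank]
  · simpa [hrank] using finrank_hankelRowSpace_le (s := series α M η) hreal

/-- A backward conjugate of a forward-minimal automaton is minimal:
if `A` is forward-minimal with `n` states and the columns of `B ∈ K^{n×n⃖}`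
form a basis of the backward space of `A`, then `n⃖` equals the rank of the
Hankel matrix of `⟦A⟧`, and consequently no automaton with fewer than `n⃖`
states realizes `⟦A⟧`. -/
theorem backward_conjugate_of_forward_minimal_minimal
    (K : Type*) [Field K] (Sig : Type*) [Fintype Sig]
    (n nb : ℕ) (M : Sig → Matrix (Fin n) (Fin n) K) (α η : Fin n → K)
    (hfwd : Submodule.span K
      (Set.range fun w : List Sig => Matrix.vecMul α ((w.map M).prod)) = ⊤)
    (B : Matrix (Fin n) (Fin nb) K)
    (hind : LinearIndependent K (fun j => fun i => B i j))
    (hspan : Submodule.span K (Set.range fun j => fun i => B i j) =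
      Submodule.span K (Set.range fun w : List Sig => ((w.map M).prod).mulVec η)) :
    (nb : Cardinal) = Module.rank K
        (Submodule.span K (Set.range fun x : List Sig =>
          fun y : List Sig => Matrix.vecMul α (((x ++ y).map M).prod) ⬝ᵥ η)) ∧
    (∀ (m : ℕ) (M' : Sig → Matrix (Fin m) (Fin m) K) (α' η' : Fin m → K),
      (∀ w : List Sig,
        Matrix.vecMul α' ((w.map M').prod) ⬝ᵥ η' = Matrix.vecMul α ((w.map M).prod) ⬝ᵥ η) →
      nb ≤ m) :=
  backward_conjugate_of_forward_minimal_minimal_general K Sig n nb M α η hfwd B hind hspan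
end

section
/- Two minimal equivalent automata are conjugate: if A₁ and A₂ are minimal automata (necessarily with the same number n of states) with ⟦A₁⟧ = ⟦A₂⟧, then there exists an invertible matrix Q ∈ K^{n×n} with α₁ = α₂ Q, η₂ = Q η₁, and Q M₁(a) = M₂(a) Q for all a ∈ Σ. -/
/-!
The Hankel matrix `H[u, w] = ⟦A⟧(u w)` of the common series factors as `F̂ᵢ B̂ᵢ` for both automata.
Minimality of `Aᵢ` means the columns of `B̂ᵢ` span `Kⁿ` (otherwise restricting to their span gives a
smaller automaton) and, by the same argument for the transposed automaton, that `F̂ᵢ` is injective.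
Two such factorizations differ by a change of basis: `Q` is the unique map with `F̂₂ Q = F̂₁`, so
`Q B̂₁ = B̂₂`, and reading this off at the empty word and at `a w` gives the conjugacy relations.
-/

open Matrix

theorem LinearMap.exists_comp_eq_of_apply_eq {R V W H ι : Type*} [Semiring R]
    [AddCommMonoid V] [Module R V] [AddCommMonoid W] [Module R W] [AddCommMonoid H] [Module R H]
    {f : V →ₗ[R] H} {g : W →ₗ[R] H} (hg : Function.Injective g)
    {v : ι → V} (hv : Submodule.span R (Set.range v) = ⊤) {v' : ι → W}
    (h : ∀ i, f (v i) = g (v' i)) :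
    ∃ q : V →ₗ[R] W, g ∘ₗ q = f ∧ ∀ i, q (v i) = v' i := by
  have hfg : LinearMap.range f ≤ LinearMap.range g := by
    rw [LinearMap.range_eq_map, ← hv, Submodule.map_span, Submodule.span_le]
    rintro _ ⟨_, ⟨i, rfl⟩, rfl⟩
    exact ⟨v' i, (h i).symm⟩
  let q := (LinearEquiv.ofInjective g hg).symm.toLinearMap ∘ₗ
    f.codRestrict (LinearMap.range g) fun x => hfg ⟨x, rfl⟩
  have hq : g ∘ₗ q = f := by
    ext x
    simp [q]
  exact ⟨q, hq, fun i => hg (by rw [← LinearMap.comp_apply, hq, h])⟩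

namespace WeightedAutomaton

section Semantics

variable {K : Type*} [CommSemiring K] {Sig : Type*} {n m : ℕ}

def semantics (M : Sig → Matrix (Fin n) (Fin n) K) (α η : Fin n → K) (w : List Sig) : K :=
  α ᵥ* (w.map M).prod ⬝ᵥ η

-- `forwardMatrix M α` is the paper's `F̂`, and `backward M η w` is the column `B̂[·, w]`.
def backward (M : Sig → Matrix (Fin n) (Fin n) K) (η : Fin n → K) (w : List Sig) : Fin n → K :=
  (w.map M).prod *ᵥ η

def forwardMatrix (M : Sig → Matrix (Fin n) (Fin n) K) (α : Fin n → K) :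
    Matrix (List Sig) (Fin n) K :=
  of fun u => α ᵥ* (u.map M).prod

variable (M : Sig → Matrix (Fin n) (Fin n) K) (α η : Fin n → K)

@[simp]
theorem backward_nil : backward M η [] = η := by
  simp [backward]

theorem backward_cons (a : Sig) (w : List Sig) :
    backward M η (a :: w) = M a *ᵥ backward M η w := by
  simp [backward, mulVec_mulVec]

theorem forwardMatrix_apply (u : List Sig) : forwardMatrix M α u = α ᵥ* (u.map M).prod :=
  rfl

@[simp]
theorem forwardMatrix_nil : forwardMatrix M α [] = α := by
  simp [forwardMatrix_apply]

theorem forwardMatrix_mulVec_apply (x : Fin n → K) (u : List Sig) :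
    (forwardMatrix M α *ᵥ x) u = α ᵥ* (u.map M).prod ⬝ᵥ x :=
  rfl

theorem forwardMatrix_mulVec_backward (w : List Sig) :
    forwardMatrix M α *ᵥ backward M η w = fun u => semantics M α η (u ++ w) := by
  ext u
  simp [forwardMatrix_mulVec_apply, backward, semantics, dotProduct_mulVec, vecMul_vecMul]

theorem prod_map_transpose (w : List Sig) :
    (w.map fun a => (M a)ᵀ).prod = (w.reverse.map M).prodᵀ := by
  simp [transpose_list_prod, Function.comp_def]

theorem forwardMatrix_apply_eq_backward_transpose (u : List Sig) :
    forwardMatrix M α u = backward (fun a => (M a)ᵀ) α u.reverse := by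
  rw [backward, prod_map_transpose, List.reverse_reverse, mulVec_transpose]
  rfl

theorem semantics_transpose (w : List Sig) :
    semantics (fun a => (M a)ᵀ) η α w = semantics M α η w.reverse := by
  rw [semantics, semantics, prod_map_transpose, vecMul_transpose, dotProduct_comm,
    dotProduct_mulVec]

theorem mul_prod_map_eq_of_mul_eq {N : Sig → Matrix (Fin m) (Fin m) K}
    {P : Matrix (Fin n) (Fin m) K} (hP : ∀ a, P * N a = M a * P) (w : List Sig) :
    P * (w.map N).prod = (w.map M).prod * P := by
  induction w with
  | nil => simp
  | cons a w ih =>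
    rw [List.map_cons, List.map_cons, List.prod_cons, List.prod_cons, ← Matrix.mul_assoc, hP,
      Matrix.mul_assoc, ih, Matrix.mul_assoc]

theorem semantics_eq_of_mul_eq {N : Sig → Matrix (Fin m) (Fin m) K}
    {P : Matrix (Fin n) (Fin m) K} {β : Fin m → K} (hP : ∀ a, P * N a = M a * P)
    (hβ : P *ᵥ β = η) (w : List Sig) :
    semantics N (α ᵥ* P) β w = semantics M α η w := by
  rw [semantics, semantics, vecMul_vecMul, mul_prod_map_eq_of_mul_eq M hP, ← vecMul_vecMul,
    ← dotProduct_mulVec, hβ]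

theorem mul_eq_mul_of_mulVec_backward_eq {M₁ M₂ : Sig → Matrix (Fin n) (Fin n) K}
    {η₁ η₂ : Fin n → K} {Q : Matrix (Fin n) (Fin n) K}
    (h₁ : Submodule.span K (Set.range (backward M₁ η₁)) = ⊤)
    (hQ : ∀ w, Q *ᵥ backward M₁ η₁ w = backward M₂ η₂ w) (a : Sig) :
    Q * M₁ a = M₂ a * Q := by
  apply toLin'.injective
  refine LinearMap.ext_on_range h₁ fun w => ?_
  simp only [toLin'_mul, LinearMap.comp_apply, toLin'_apply, ← backward_cons, hQ]

end Semantics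

section Conjugacy

variable {K : Type*} [CommRing K] {Sig : Type*} {n : ℕ}

theorem isUnit_of_mulVec_backward_eq {M₁ M₂ : Sig → Matrix (Fin n) (Fin n) K}
    {η₁ η₂ : Fin n → K} {Q : Matrix (Fin n) (Fin n) K}
    (h₂ : Submodule.span K (Set.range (backward M₂ η₂)) = ⊤)
    (hQ : ∀ w, Q *ᵥ backward M₁ η₁ w = backward M₂ η₂ w) : IsUnit Q := by
  rw [← mulVec_surjective_iff_isUnit]
  refine (LinearMap.range_eq_top (f := Q.mulVecLin)).1 (eq_top_iff.2 ?_)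
  rw [← h₂, Submodule.span_le]
  rintro _ ⟨w, rfl⟩
  exact ⟨backward M₁ η₁ w, hQ w⟩

end Conjugacy

section Minimal

variable {K : Type*} [Field K] {Sig : Type*} {n : ℕ}

def IsMinimal (M : Sig → Matrix (Fin n) (Fin n) K) (α η : Fin n → K) : Prop :=
  ∀ (m : ℕ) (M' : Sig → Matrix (Fin m) (Fin m) K) (α' η' : Fin m → K),
    (∀ w, semantics M' α' η' w = semantics M α η w) → n ≤ m

variable {M : Sig → Matrix (Fin n) (Fin n) K} {α η : Fin n → K}

theorem exists_semantics_eq_of_mulVec_mem (S : Submodule K (Fin n → K)) (hη : η ∈ S)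
    (hS : ∀ a, ∀ x ∈ S, M a *ᵥ x ∈ S) :
    ∃ (M' : Sig → Matrix (Fin (Module.finrank K S)) (Fin (Module.finrank K S)) K)
      (α' η' : Fin (Module.finrank K S) → K),
      ∀ w, semantics M' α' η' w = semantics M α η w := by
  let e := (Module.finBasis K S).equivFun
  let P := LinearMap.toMatrix' (S.subtype ∘ₗ e.symm.toLinearMap)
  refine ⟨fun a => LinearMap.toMatrix' (e.toLinearMap ∘ₗ (toLin' (M a)).restrict (hS a) ∘ₗ
    e.symm.toLinearMap), α ᵥ* P, e ⟨η, hη⟩, semantics_eq_of_mul_eq M α η (fun a => ?_) ?_⟩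
  · apply toLin'.injective
    refine LinearMap.ext fun x => ?_
    simp only [P, toLin'_mul, toLin'_toMatrix', LinearMap.comp_apply, LinearEquiv.coe_coe,
      LinearEquiv.symm_apply_apply]
    rfl
  · simp [P]

theorem IsMinimal.eq_top_of_mulVec_mem (hmin : IsMinimal M α η) {S : Submodule K (Fin n → K)}
    (hη : η ∈ S) (hS : ∀ a, ∀ x ∈ S, M a *ᵥ x ∈ S) : S = ⊤ := by
  obtain ⟨M', α', η', h⟩ := exists_semantics_eq_of_mulVec_mem S hη hS
  refine Submodule.eq_top_of_finrank_eq (le_antisymm (Submodule.finrank_le S) ?_)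
  simpa using hmin _ M' α' η' h

theorem IsMinimal.span_backward_eq_top (hmin : IsMinimal M α η) :
    Submodule.span K (Set.range (backward M η)) = ⊤ := by
  refine hmin.eq_top_of_mulVec_mem (Submodule.subset_span ⟨[], backward_nil M η⟩) fun a x hx => ?_
  have hinv : Submodule.span K (Set.range (backward M η)) ≤
      (Submodule.span K (Set.range (backward M η))).comap (toLin' (M a)) :=
    Submodule.span_le.2 <| Set.range_subset_iff.2 fun w =>
      Submodule.subset_span ⟨a :: w, backward_cons M η a w⟩
  exact hinv hx

theorem IsMinimal.transpose (hmin : IsMinimal M α η) : IsMinimal (fun a => (M a)ᵀ) η α :=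
  fun m M' α' η' h => hmin m (fun a => (M' a)ᵀ) η' α' fun w => by
    rw [semantics_transpose, h, semantics_transpose, List.reverse_reverse]

theorem IsMinimal.span_forwardMatrix_eq_top (hmin : IsMinimal M α η) :
    Submodule.span K (Set.range (forwardMatrix M α)) = ⊤ := by
  have hrows : forwardMatrix M α = backward (fun a => (M a)ᵀ) α ∘ List.reverse :=
    funext (forwardMatrix_apply_eq_backward_transpose M α)
  rw [hrows, List.reverse_involutive.surjective.range_comp]
  exact hmin.transpose.span_backward_eq_top

theorem IsMinimal.injective_forwardMatrix_mulVec (hmin : IsMinimal M α η) :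
    Function.Injective (forwardMatrix M α).mulVecLin := by
  rw [← LinearMap.ker_eq_bot, Submodule.eq_bot_iff]
  intro x hx
  have hperp : (dotProductBilin K K).flip x = 0 :=
    LinearMap.ext_on_range hmin.span_forwardMatrix_eq_top fun u => congrFun hx u
  funext i
  simpa using LinearMap.congr_fun hperp (Pi.single i 1)

end Minimal

end WeightedAutomaton

open WeightedAutomaton in
theorem minimal_equivalent_conjugate_general (K : Type*) [Field K] (Sig : Type*)
    (n : ℕ)
    (M₁ : Sig → Matrix (Fin n) (Fin n) K) (α₁ η₁ : Fin n → K)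
    (M₂ : Sig → Matrix (Fin n) (Fin n) K) (α₂ η₂ : Fin n → K)
    (hmin₁ : ∀ (m : ℕ) (M' : Sig → Matrix (Fin m) (Fin m) K) (α' η' : Fin m → K),
      (∀ w : List Sig,
        Matrix.vecMul α' ((w.map M').prod) ⬝ᵥ η' = Matrix.vecMul α₁ ((w.map M₁).prod) ⬝ᵥ η₁) →
      n ≤ m)
    (hmin₂ : ∀ (m : ℕ) (M' : Sig → Matrix (Fin m) (Fin m) K) (α' η' : Fin m → K),
      (∀ w : List Sig,
        Matrix.vecMul α' ((w.map M').prod) ⬝ᵥ η' = Matrix.vecMul α₂ ((w.map M₂).prod) ⬝ᵥ η₂) →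
      n ≤ m)
    (heq : ∀ w : List Sig,
      Matrix.vecMul α₁ ((w.map M₁).prod) ⬝ᵥ η₁ = Matrix.vecMul α₂ ((w.map M₂).prod) ⬝ᵥ η₂) :
    ∃ Q : Matrix (Fin n) (Fin n) K, IsUnit Q ∧
      α₁ = Matrix.vecMul α₂ Q ∧ η₂ = Q.mulVec η₁ ∧ ∀ a : Sig, Q * M₁ a = M₂ a * Q := by
  have hmin₁ : IsMinimal M₁ α₁ η₁ := hmin₁
  have hmin₂ : IsMinimal M₂ α₂ η₂ := hmin₂
  have hHankel : ∀ w, (forwardMatrix M₁ α₁).mulVecLin (backward M₁ η₁ w) =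
      (forwardMatrix M₂ α₂).mulVecLin (backward M₂ η₂ w) := fun w => by
    simp only [mulVecLin_apply, forwardMatrix_mulVec_backward, semantics, heq]
  obtain ⟨q, hq, hqg⟩ := LinearMap.exists_comp_eq_of_apply_eq
    hmin₂.injective_forwardMatrix_mulVec hmin₁.span_backward_eq_top hHankel
  set Q := LinearMap.toMatrix' q
  have hQ : ∀ w, Q *ᵥ backward M₁ η₁ w = backward M₂ η₂ w :=
    fun w => (LinearMap.toMatrix'_mulVec q _).trans (hqg w)
  have hFQ : forwardMatrix M₂ α₂ * Q = forwardMatrix M₁ α₁ := by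
    refine ext_iff_mulVec.2 fun x => ?_
    rw [← mulVec_mulVec, LinearMap.toMatrix'_mulVec]
    exact LinearMap.congr_fun hq x
  refine ⟨Q, isUnit_of_mulVec_backward_eq hmin₂.span_backward_eq_top hQ, ?_,
    by simpa using (hQ []).symm, mul_eq_mul_of_mulVec_backward_eq hmin₁.span_backward_eq_top hQ⟩
  rw [← forwardMatrix_nil M₁ α₁, ← hFQ, mul_apply_eq_vecMul, forwardMatrix_nil]

/-- Two minimal equivalent automata are conjugate: if `A₁, A₂` are
minimal automata with the same number `n` of states and `⟦A₁⟧ = ⟦A₂⟧`, then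
there is an invertible `Q ∈ K^{n×n}` with `α₁ = α₂ Q`, `η₂ = Q η₁`, and
`Q M₁(a) = M₂(a) Q` for all letters `a`. -/
theorem minimal_equivalent_conjugate (K : Type*) [Field K] (Sig : Type*) [Fintype Sig]
    (n : ℕ)
    (M₁ : Sig → Matrix (Fin n) (Fin n) K) (α₁ η₁ : Fin n → K)
    (M₂ : Sig → Matrix (Fin n) (Fin n) K) (α₂ η₂ : Fin n → K)
    (hmin₁ : ∀ (m : ℕ) (M' : Sig → Matrix (Fin m) (Fin m) K) (α' η' : Fin m → K),
      (∀ w : List Sig,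
        Matrix.vecMul α' ((w.map M').prod) ⬝ᵥ η' = Matrix.vecMul α₁ ((w.map M₁).prod) ⬝ᵥ η₁) →
      n ≤ m)
    (hmin₂ : ∀ (m : ℕ) (M' : Sig → Matrix (Fin m) (Fin m) K) (α' η' : Fin m → K),
      (∀ w : List Sig,
        Matrix.vecMul α' ((w.map M').prod) ⬝ᵥ η' = Matrix.vecMul α₂ ((w.map M₂).prod) ⬝ᵥ η₂) →
      n ≤ m)
    (heq : ∀ w : List Sig,
      Matrix.vecMul α₁ ((w.map M₁).prod) ⬝ᵥ η₁ = Matrix.vecMul α₂ ((w.map M₂).prod) ⬝ᵥ η₂) :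
    ∃ Q : Matrix (Fin n) (Fin n) K, IsUnit Q ∧
      α₁ = Matrix.vecMul α₂ Q ∧ η₂ = Q.mulVec η₁ ∧ ∀ a : Sig, Q * M₁ a = M₂ a * Q :=
  minimal_equivalent_conjugate_general K Sig n M₁ α₁ η₁ M₂ α₂ η₂ hmin₁ hmin₂ heq
end

section
/- Let s be a series of rank n with Hankel matrix H and let C = {c₁,…,c_n} be complete. Then the Hankel automaton Ā = (n, Σ, M̄, H[ε,C], η_ε) satisfies H[·,C] M̄(w) = H[·, wC] for all words w ∈ Σ*, and ⟦Ā⟧ = s; moreover Ā is minimal. -/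
/-!
Reading the defining relation of `M̄(a)` on the row `xa` of `H` shows that multiplying by `M̄(a)`
moves the letter `a` from the column index to the row index, so `H[·,C] M̄(w) = H[·,wC]` follows
by induction on `w`; its row `ε`, paired with `η_ε`, is `s(w)`. For minimality, an automaton
`(α', M', η')` of dimension `m` realizing `s` writes every Hankel column `H[·,y]` as the image of
the vector `M'(y) η' ∈ Kᵐ` under the linear map `v ↦ (x ↦ α' M'(x) v)`; hence the `n` independent
columns `H[·,C]` come from `n` independent vectors of `Kᵐ`.
-/

open Matrix

section HankelColumns

variable {Sig K ι : Type*} [Fintype ι] [DecidableEq ι]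

theorem hankel_columns_mul_prod [Semiring K] {s : List Sig → K}
    {C : ι → List Sig} {M : Sig → Matrix ι ι K}
    (hM : ∀ (a : Sig) (x : List Sig) (j : ι), s (x ++ (a :: C j)) = ∑ i, s (x ++ C i) * M a i j)
    (w x : List Sig) (j : ι) :
    s (x ++ (w ++ C j)) = ∑ i, s (x ++ C i) * (w.map M).prod i j := by
  induction w generalizing x with
  | nil => simp [one_apply]
  | cons a w ih =>
    calc s (x ++ (a :: w ++ C j))
        = ∑ i, s (x ++ (a :: C i)) * (w.map M).prod i j := by
          simpa using ih (x ++ [a])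
      _ = ∑ i, (∑ k, s (x ++ C k) * M a k i) * (w.map M).prod i j := by simp only [hM]
      _ = ∑ k, s (x ++ C k) * ((a :: w).map M).prod k j := by
          simp only [List.map_cons, List.prod_cons, mul_apply, Finset.sum_mul, Finset.mul_sum,
            mul_assoc]
          exact Finset.sum_comm

theorem vecMul_prod_dotProduct_eq_of_hankel [CommSemiring K] {s : List Sig → K} {C : ι → List Sig}
    {M : Sig → Matrix ι ι K} {η : ι → K}
    (hM : ∀ (a : Sig) (x : List Sig) (j : ι), s (x ++ (a :: C j)) = ∑ i, s (x ++ C i) * M a i j)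
    (hη : ∀ x, s x = ∑ j, s (x ++ C j) * η j) (w : List Sig) :
    vecMul (fun i => s (C i)) (w.map M).prod ⬝ᵥ η = s w := by
  have hrow : vecMul (fun i => s (C i)) (w.map M).prod = fun j => s (w ++ C j) := by
    funext j
    simpa [vecMul, dotProduct] using (hankel_columns_mul_prod hM w [] j).symm
  rw [hrow, hη w]
  rfl

end HankelColumns

section Minimality

variable {Sig K ι : Type*} [CommRing K] [Fintype ι] [DecidableEq ι]

def observabilityMap (M : Sig → Matrix ι ι K) (α : ι → K) :
    (ι → K) →ₗ[K] (List Sig → K) where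
  toFun v x := vecMul α (x.map M).prod ⬝ᵥ v
  map_add' u v := by funext x; simp [dotProduct_add]
  map_smul' c v := by funext x; simp [dotProduct_smul]

theorem hankel_column_eq_observabilityMap {s : List Sig → K} {M : Sig → Matrix ι ι K}
    {α η : ι → K} (hs : ∀ w, vecMul α (w.map M).prod ⬝ᵥ η = s w) (y : List Sig) :
    (fun x => s (x ++ y)) = observabilityMap M α ((y.map M).prod *ᵥ η) := by
  funext x
  simp [observabilityMap, ← hs, ← vecMul_vecMul, dotProduct_mulVec]

theorem card_le_of_linearIndependent_hankel_columns [StrongRankCondition K] {κ : Type*}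
    [Fintype κ] {s : List Sig → K} {C : κ → List Sig}
    (hC : LinearIndependent K fun j x => s (x ++ C j)) {M : Sig → Matrix ι ι K} {α η : ι → K}
    (hs : ∀ w, vecMul α (w.map M).prod ⬝ᵥ η = s w) :
    Fintype.card κ ≤ Fintype.card ι := by
  have hstates : LinearIndependent K fun j => ((C j).map M).prod *ᵥ η := by
    refine .of_comp (observabilityMap M α) ?_
    convert hC using 1
    funext j
    exact (hankel_column_eq_observabilityMap hs (C j)).symm
  simpa using hstates.fintype_card_le_finrank

end Minimality

theorem hankel_automaton_general (K : Type*) [Field K] (Sig : Type*)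
    (s : List Sig → K) (n : ℕ)
    (C : Fin n → List Sig)
    (hind : LinearIndependent K (fun j => fun x : List Sig => s (x ++ C j)))
    (ηε : Fin n → K)
    (hηε : ∀ x : List Sig, s x = ∑ j, s (x ++ C j) * ηε j)
    (Mb : Sig → Matrix (Fin n) (Fin n) K)
    (hMb : ∀ (a : Sig) (x : List Sig) (j : Fin n),
      s (x ++ (a :: C j)) = ∑ i, s (x ++ C i) * Mb a i j) :
    (∀ (w : List Sig) (x : List Sig) (j : Fin n),
      s (x ++ (w ++ C j)) = ∑ i, s (x ++ C i) * ((w.map Mb).prod) i j) ∧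
    (∀ w : List Sig,
      Matrix.vecMul (fun i => s (C i)) ((w.map Mb).prod) ⬝ᵥ ηε = s w) ∧
    (∀ (m : ℕ) (M' : Sig → Matrix (Fin m) (Fin m) K) (α' η' : Fin m → K),
      (∀ w : List Sig, Matrix.vecMul α' ((w.map M').prod) ⬝ᵥ η' = s w) → n ≤ m) := by
  refine ⟨hankel_columns_mul_prod hMb, vecMul_prod_dotProduct_eq_of_hankel hMb hηε, ?_⟩
  intro m M' α' η' hs
  simpa using card_le_of_linearIndependent_hankel_columns hind hs

/-- Let `s` be a series of Hankel rank `n` and `C = {c₁,…,c_n}` a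
complete set (the columns `H[·,C]` form a basis of the column space of the
Hankel matrix `H`). The Hankel automaton `Ā = (n, Σ, M̄, H[ε,C], η_ε)` satisfies
`H[·,C] M̄(w) = H[·,wC]` for all words `w`, realizes `s`, and is minimal. -/
theorem hankel_automaton (K : Type*) [Field K] (Sig : Type*) [Fintype Sig]
    (s : List Sig → K) (n : ℕ)
    (hrank : Module.rank K
      (Submodule.span K (Set.range fun y : List Sig => fun x : List Sig => s (x ++ y))) = n)
    (C : Fin n → List Sig)
    (hind : LinearIndependent K (fun j => fun x : List Sig => s (x ++ C j)))
    (hspanC : Submodule.span K (Set.range fun j => fun x : List Sig => s (x ++ C j)) =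
      Submodule.span K (Set.range fun y : List Sig => fun x : List Sig => s (x ++ y)))
    (ηε : Fin n → K)
    (hηε : ∀ x : List Sig, s x = ∑ j, s (x ++ C j) * ηε j)
    (Mb : Sig → Matrix (Fin n) (Fin n) K)
    (hMb : ∀ (a : Sig) (x : List Sig) (j : Fin n),
      s (x ++ (a :: C j)) = ∑ i, s (x ++ C i) * Mb a i j) :
    (∀ (w : List Sig) (x : List Sig) (j : Fin n),
      s (x ++ (w ++ C j)) = ∑ i, s (x ++ C i) * ((w.map Mb).prod) i j) ∧
    (∀ w : List Sig,
      Matrix.vecMul (fun i => s (C i)) ((w.map Mb).prod) ⬝ᵥ ηε = s w) ∧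
    (∀ (m : ℕ) (M' : Sig → Matrix (Fin m) (Fin m) K) (α' η' : Fin m → K),
      (∀ w : List Sig, Matrix.vecMul α' ((w.map M').prod) ⬝ᵥ η' = s w) → n ≤ m) :=
  hankel_automaton_general K Sig s n C hind ηε hηε Mb hMb
end

section
/- A series s : Σ* → K has Hankel rank at most n if and only if there exists a weighted automaton with at most n states whose semantics equals s. -/
/-!
If `s` is computed by an automaton with states `ι`, then `s (x ++ y) = (α M(x)) ⬝ᵥ (M(y) η)`,
so every row of the Hankel matrix is a combination of the `|ι|` functions `y ↦ (M(y) η)ᵢ`.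
Conversely, the span `V` of the rows is invariant under the left shifts `f ↦ f (a :: ·)`;
if `V` is finite-dimensional, the shifts written in a basis of `V` are the transition matrices,
the coordinates of the row `s` are the initial vector, and evaluation at `[]` gives the final
vector.
-/

open Matrix

namespace Module.Basis

variable {R V ι Sig : Type*} [CommSemiring R] [AddCommMonoid V] [Module R V] [Fintype ι]
  (b : Basis ι R V)

theorem repr_dotProduct_apply (φ : V →ₗ[R] R) (v : V) :
    b.repr v ⬝ᵥ (fun i => φ (b i)) = φ v := by
  conv_rhs => rw [← b.sum_repr v]
  simp only [map_sum, map_smul, smul_eq_mul, dotProduct]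

theorem vecMul_repr_prod_transpose_toMatrix [DecidableEq ι] (T : Sig → Module.End R V)
    (w : List Sig) (v : V) :
    vecMul (b.repr v) (w.map fun a => (LinearMap.toMatrix b b (T a))ᵀ).prod =
      b.repr (w.foldl (fun v a => T a v) v) := by
  induction w generalizing v with
  | nil => simp
  | cons a w ih =>
    rw [List.map_cons, List.prod_cons, ← vecMul_vecMul, vecMul_transpose,
      LinearMap.toMatrix_mulVec_repr, ih, List.foldl_cons]

end Module.Basis

section Hankel

variable {K : Type*} [Field K] {Sig : Type*}

def hankelSpace (s : List Sig → K) : Submodule K (List Sig → K) :=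
  Submodule.span K (Set.range fun x : List Sig => fun y : List Sig => s (x ++ y))

section Automaton

variable {ι : Type*} [Fintype ι] [DecidableEq ι]

def automatonSeries (M : Sig → Matrix ι ι K) (α η : ι → K) (w : List Sig) : K :=
  vecMul α (w.map M).prod ⬝ᵥ η

def automatonSuffixMatrix (M : Sig → Matrix ι ι K) (η : ι → K) : Matrix (List Sig) ι K :=
  of fun y => (y.map M).prod *ᵥ η

theorem hankelSpace_automatonSeries_le_range (M : Sig → Matrix ι ι K) (α η : ι → K) :
    hankelSpace (automatonSeries M α η) ≤
      LinearMap.range (automatonSuffixMatrix M η).mulVecLin := by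
  rw [hankelSpace, Submodule.span_le]
  rintro _ ⟨x, rfl⟩
  refine ⟨vecMul α (x.map M).prod, funext fun y => ?_⟩
  simp only [mulVecLin_apply, automatonSeries, List.map_append, List.prod_append]
  rw [← vecMul_vecMul, ← dotProduct_mulVec]
  exact dotProduct_comm _ _

theorem rank_hankelSpace_automatonSeries_le (M : Sig → Matrix ι ι K) (α η : ι → K) :
    Module.rank K (hankelSpace (automatonSeries M α η)) ≤ Fintype.card ι :=
  calc _ ≤ Module.rank K (LinearMap.range (automatonSuffixMatrix M η).mulVecLin) :=
        Submodule.rank_mono (hankelSpace_automatonSeries_le_range M α η)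
    _ ≤ Fintype.card ι := by
      simpa using lift_rank_range_le (automatonSuffixMatrix M η).mulVecLin

end Automaton

theorem hankelSpace_le_comap_shift (s : List Sig → K) (a : Sig) :
    hankelSpace s ≤ (hankelSpace s).comap (LinearMap.funLeft K K (List.cons a)) := by
  rw [hankelSpace, Submodule.span_le]
  rintro _ ⟨x, rfl⟩
  exact Submodule.subset_span ⟨x ++ [a], funext fun y => by simp [LinearMap.funLeft]⟩

def hankelShift (s : List Sig → K) (a : Sig) : Module.End K (hankelSpace s) :=
  (LinearMap.funLeft K K (List.cons a)).restrict (hankelSpace_le_comap_shift s a)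

theorem coe_foldl_hankelShift (s : List Sig → K) (w : List Sig) (f : hankelSpace s) :
    ((w.foldl (fun f a => hankelShift s a f) f : hankelSpace s) : List Sig → K) =
      fun y => (f : List Sig → K) (w ++ y) := by
  induction w generalizing f with
  | nil => rfl
  | cons a w ih =>
    rw [List.foldl_cons, ih]
    rfl

theorem automatonSeries_toMatrix_hankelShift (s : List Sig → K) {ι : Type*} [Fintype ι]
    [DecidableEq ι] (b : Module.Basis ι K (hankelSpace s)) :
    automatonSeries (fun a => (LinearMap.toMatrix b b (hankelShift s a))ᵀ)
      (b.repr ⟨s, Submodule.subset_span ⟨[], rfl⟩⟩) (fun i => (b i : List Sig → K) []) = s := by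
  funext w
  let evalNil : hankelSpace s →ₗ[K] K := (LinearMap.proj []).comp (hankelSpace s).subtype
  rw [automatonSeries, b.vecMul_repr_prod_transpose_toMatrix]
  refine (b.repr_dotProduct_apply evalNil _).trans ?_
  simp [evalNil, coe_foldl_hankelShift]

end Hankel

theorem rank_le_iff_automaton_general (K : Type*) [Field K] (Sig : Type*)
    (s : List Sig → K) (n : ℕ) :
    Module.rank K
        (Submodule.span K (Set.range fun x : List Sig => fun y : List Sig => s (x ++ y))) ≤ n ↔
      ∃ (m : ℕ), m ≤ n ∧ ∃ (M : Sig → Matrix (Fin m) (Fin m) K) (α η : Fin m → K),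
        ∀ w : List Sig, Matrix.vecMul α ((w.map M).prod) ⬝ᵥ η = s w := by
  change Module.rank K (hankelSpace s) ≤ n ↔
    ∃ m, m ≤ n ∧ ∃ (M : Sig → Matrix (Fin m) (Fin m) K) (α η : Fin m → K),
      ∀ w, automatonSeries M α η w = s w
  constructor
  · intro hrank
    have : FiniteDimensional K (hankelSpace s) :=
      Module.rank_lt_aleph0_iff.mp (hrank.trans_lt Cardinal.natCast_lt_aleph0)
    exact ⟨_, Module.finrank_le_of_rank_le hrank, _, _, _,
      congrFun (automatonSeries_toMatrix_hankelShift s (Module.finBasis K (hankelSpace s)))⟩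
  · rintro ⟨m, hm, M, α, η, hs⟩
    obtain rfl : automatonSeries M α η = s := funext hs
    exact (rank_hankelSpace_automatonSeries_le M α η).trans (by simpa using hm)

/-- A series `s : Σ* → K` has Hankel rank at most `n` iff there
is a weighted automaton with at most `n` states whose semantics equals `s`. -/
theorem rank_le_iff_automaton (K : Type*) [Field K] (Sig : Type*) [Fintype Sig]
    (s : List Sig → K) (n : ℕ) :
    Module.rank K
        (Submodule.span K (Set.range fun x : List Sig => fun y : List Sig => s (x ++ y))) ≤ n ↔
      ∃ (m : ℕ), m ≤ n ∧ ∃ (M : Sig → Matrix (Fin m) (Fin m) K) (α η : Fin m → K),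
        ∀ w : List Sig, Matrix.vecMul α ((w.map M).prod) ⬝ᵥ η = s w :=
  rank_le_iff_automaton_general K Sig s n
end
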